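/- Let k ≥ 6 be an even integer and ℓ = (k-2)/2. Let G be a 2-connected simple graph containing no cycle of length at least k, suppose the (ℓ-1)-disintegration H = H(G,ℓ-1) is non-empty, and let P = x₁x₂⋯x_m be a crossing H-path of G with the maximum number of vertices among all H-paths, where m ≥ k. Let (i,j) be a minimal crossing pair of P whose length j - i - 1 is maximum among minimal crossing pairs of P. Then: if m ≥ k+2, the pair (i,j) is the unique minimal crossing pair of P; if m = k+1, P has at most two minimal crossing pairs; and if m = k, every minimal crossing pair (i',j') of P with (i',j') ≠ (i,j) satisfies j' - i' = 2. -/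

import Mathlib

/-!
Let `A` and `B` be the indices of the path-neighbours of `x m` and `x 1`. Since `P` is a longest
`H`-path, every `H`-neighbour of an endpoint lies on `P`, so `|A|, |B| ≥ ℓ`; and
`A ∪ B ⊆ [2, m - 1]`, since an edge `x 1 x m` would close a cycle of length `m ≥ k`. The interiors
of distinct minimal crossing pairs are disjoint from each other and from `A ∪ B`, and
`|A ∩ B|` exceeds the number of minimal crossing pairs by at most one; together
`|A| + |B| + ∑ (j - i - 2) ≤ m - 1`, summing over minimal crossing pairs. A crossing pair `(i, j)`
closes the cycle `x i ⋯ x 1 x j ⋯ x m x i`, so `j - i - 2 ≥ m - k`. With `2ℓ = k - 2` this gives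
`∑ (j - i - 2) ≤ m - k + 1`, which leaves room for one pair if `m ≥ k + 2`, for two if
`m = k + 1`, and, if `m = k`, for only one pair with `j - i > 2`, necessarily the longest one.
-/

open SimpleGraph

variable {V : Type*}

/-- `x 1, …, x m` is a path in `G` (1-indexed): injective on `[1, m]`, with consecutive
vertices adjacent. -/
def IsIndexedPath (G : SimpleGraph V) (x : ℕ → V) (m : ℕ) : Prop :=
  (∀ i j, 1 ≤ i → i ≤ m → 1 ≤ j → j ≤ m → x i = x j → i = j) ∧
  ∀ i, 1 ≤ i → i < m → G.Adj (x i) (x (i + 1))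

/-- The vertex set of the indexed path `x 1, …, x m`. -/
def pathVerts (x : ℕ → V) (m : ℕ) : Set V := {v | ∃ i, 1 ≤ i ∧ i ≤ m ∧ x i = v}

/-- `N_P(v)`: the neighbours of `v` among the vertices of the path. -/
def pathNbrs (G : SimpleGraph V) (x : ℕ → V) (m : ℕ) (v : V) : Set V :=
  {u | u ∈ pathVerts x m ∧ G.Adj v u}

/-- `N_P⁻(x₁)`: immediate predecessors on `P` of the path-neighbours of `x₁`. -/
def predNbrs (G : SimpleGraph V) (x : ℕ → V) (m : ℕ) : Set V :=
  {v | ∃ i, 2 ≤ i ∧ i ≤ m ∧ G.Adj (x 1) (x i) ∧ v = x (i - 1)}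

/-- `N_P⁺(x_m)`: immediate successors on `P` of the path-neighbours of `x_m`. -/
def succNbrs (G : SimpleGraph V) (x : ℕ → V) (m : ℕ) : Set V :=
  {v | ∃ i, 1 ≤ i ∧ i < m ∧ G.Adj (x m) (x i) ∧ v = x (i + 1)}

/-- `G` contains no cycle of length at least `k`, i.e. `c(G) < k`. -/
def NoCycleGE (G : SimpleGraph V) (k : ℕ) : Prop :=
  ∀ (v : V) (w : G.Walk v v), w.IsCycle → w.length < k

/-- `G` contains a cycle of length at least `L`. -/
def HasCycleGE (G : SimpleGraph V) (L : ℕ) : Prop :=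
  ∃ (v : V) (w : G.Walk v v), w.IsCycle ∧ L ≤ w.length

/-- `G` is 2-connected: at least 3 vertices and deleting any single vertex leaves a
connected graph. -/
def TwoConnected (G : SimpleGraph V) [Fintype V] : Prop :=
  3 ≤ Fintype.card V ∧ ∀ v : V, (G.induce {u | u ≠ v}).Connected

/-- The vertex set of the `α`-disintegration `H(G, α)` of `G`: the largest vertex set on
which the induced subgraph has minimum degree at least `α + 1`. -/
noncomputable def disint (G : SimpleGraph V) (α : ℕ) : Set V :=
  ⋃₀ {S : Set V | ∀ v ∈ S, α + 1 ≤ {u | u ∈ S ∧ G.Adj v u}.ncard}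

/-- `N_s(G)`: the number of `s`-cliques of `G`. -/
noncomputable def cliqueCount (G : SimpleGraph V) (s : ℕ) : ℕ :=
  {S : Finset V | G.IsNClique s S}.ncard

/-- `h_s(n, k, a) = C(k - a, s) + (n - k + a) · C(a, s - 1)`. -/
def hval (n k a s : ℕ) : ℕ :=
  Nat.choose (k - a) s + (n - k + a) * Nat.choose a (s - 1)

/-- The graph `H(n, k, a)` on `Fin n`: the first `a` vertices form the set `A`, the next
`k - 2a` vertices form `C`, and the remaining `n - k + a` vertices form `B`; `A ∪ C` is a
clique and every vertex of `A` is joined to every vertex of `B`. -/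
def Hgraph (n k a : ℕ) : SimpleGraph (Fin n) :=
  SimpleGraph.fromRel fun i j =>
    (i.val < a ∧ k - a ≤ j.val) ∨ (i.val < k - a ∧ j.val < k - a)

/-- `G` is isomorphic to a subgraph of `H`. -/
def IsSubgraphOf {W : Type*} (G : SimpleGraph V) (H : SimpleGraph W) : Prop :=
  ∃ f : V → W, Function.Injective f ∧ ∀ a b, G.Adj a b → H.Adj (f a) (f b)

/-- Every connected component of `H` is a star: there is an assignment of a "center" to
each vertex such that every edge joins the common center of its endpoints to a leaf. -/
def IsStarForest (H : SimpleGraph V) : Prop :=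
  ∃ f : V → V, ∀ a b, H.Adj a b → (f a = a ∧ f b = a) ∨ (f a = b ∧ f b = b)

/-- `(i, j)` is a crossing pair of the indexed path `x 1, …, x m`. -/
def CrossPair (G : SimpleGraph V) (x : ℕ → V) (m i j : ℕ) : Prop :=
  1 ≤ i ∧ i < j ∧ j ≤ m ∧ G.Adj (x m) (x i) ∧ G.Adj (x 1) (x j)

/-- `(i, j)` is a minimal crossing pair of the indexed path `x 1, …, x m`. -/
def MinCrossPair (G : SimpleGraph V) (x : ℕ → V) (m i j : ℕ) : Prop :=
  CrossPair G x m i j ∧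
    ∀ h, i < h → h < j → ¬G.Adj (x 1) (x h) ∧ ¬G.Adj (x m) (x h)

/-- One application of the successor operation along the path to a set of vertices. -/
def succStep (x : ℕ → V) (m : ℕ) (S : Set V) : Set V :=
  {v | ∃ i, 1 ≤ i ∧ i < m ∧ x i ∈ S ∧ v = x (i + 1)}

/-- `N_P^{+i}(x_m)`: the `i`-fold iterated successor set of `N_P(x_m)` along the path. -/
def iterNbrSucc (G : SimpleGraph V) (x : ℕ → V) (m i : ℕ) : Set V :=
  (succStep x m)^[i] (pathNbrs G x m (x m))

namespace IsIndexedPath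

variable {G : SimpleGraph V} {x : ℕ → V} {m : ℕ}

theorem reverse (hP : IsIndexedPath G x m) : IsIndexedPath G (fun t => x (m + 1 - t)) m := by
  refine ⟨fun a b ha ham hb hbm hab => ?_, fun a ha ham => ?_⟩
  · have := hP.1 _ _ (by omega) (by omega) (by omega) (by omega) hab
    omega
  · have h := hP.2 (m - a) (by omega) (by omega)
    rw [show m - a + 1 = m + 1 - a by omega] at h
    simpa only [show m + 1 - (a + 1) = m - a by omega] using h.symm

theorem snoc (hP : IsIndexedPath G x m) {u : V} (hu : u ∉ pathVerts x m)
    (hadj : G.Adj (x m) u) : IsIndexedPath G (fun t => if t ≤ m then x t else u) (m + 1) := by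
  have hne : ∀ a, 1 ≤ a → a ≤ m → x a ≠ u := fun a ha ham h => hu ⟨a, ha, ham, h⟩
  refine ⟨fun a b ha ham hb hbm hab => ?_, fun a ha ham => ?_⟩
  · by_cases ha' : a ≤ m <;> by_cases hb' : b ≤ m <;> simp only [ha', hb', if_true, if_false] at hab
    · exact hP.1 a b ha ha' hb hb' hab
    · exact absurd hab (hne a ha ha')
    · exact absurd hab.symm (hne b hb hb')
    · omega
  · by_cases ha' : a + 1 ≤ m
    · simpa only [ha', show a ≤ m by omega, if_true] using hP.2 a ha ha'
    · obtain rfl : a = m := by omega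
      simpa only [le_refl, ha', if_true, if_false] using hadj

/-- The path `x u, x (u-1), …, x 1, x v, x (v+1), …, x m`, obtained by the chord `x 1 x v`. -/
theorem reroute (hP : IsIndexedPath G x m) {u v : ℕ} (hu : 1 ≤ u) (huv : u < v) (hvm : v ≤ m)
    (hadj : G.Adj (x 1) (x v)) :
    IsIndexedPath G (fun t => if t ≤ u then x (u + 1 - t) else x (v - 1 - u + t))
      (u + m + 1 - v) := by
  refine ⟨fun a b ha ham hb hbm hab => ?_, fun a ha ham => ?_⟩
  · by_cases ha' : a ≤ u <;> by_cases hb' : b ≤ u <;> simp only [ha', hb', if_true, if_false] at hab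
    all_goals
      have := hP.1 _ _ (by omega) (by omega) (by omega) (by omega) hab
      omega
  · by_cases ha' : a + 1 ≤ u
    · have h := hP.2 (u - a) (by omega) (by omega)
      rw [show u - a + 1 = u + 1 - a by omega] at h
      simpa only [ha', show a ≤ u by omega, if_true, show u + 1 - (a + 1) = u - a by omega]
        using h.symm
    · by_cases hau : a = u
      · subst hau
        simpa only [le_refl, ha', if_true, if_false, show a + 1 - a = 1 by omega,
          show v - 1 - a + (a + 1) = v by omega] using hadj
      · have h := hP.2 (v - 1 - u + a) (by omega) (by omega)
        simpa only [ha', show ¬a ≤ u by omega, if_false, Nat.add_assoc] using h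

theorem exists_walk (hP : IsIndexedPath G x m) {n : ℕ} (hn : 1 ≤ n) (hnm : n ≤ m) :
    ∃ w : G.Walk (x 1) (x n), w.IsPath ∧ w.length = n - 1 ∧
      ∀ v ∈ w.support, ∃ t, 1 ≤ t ∧ t ≤ n ∧ x t = v := by
  induction n, hn using Nat.le_induction with
  | base => exact ⟨.nil, .nil, rfl, by simpa using ⟨1, le_rfl, le_rfl, rfl⟩⟩
  | succ n hn ih =>
    obtain ⟨w, hw, hlen, hsupp⟩ := ih (by omega)
    have hnew : x (n + 1) ∉ w.support := fun h => by
      obtain ⟨t, ht, htn, hxt⟩ := hsupp _ h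
      have := hP.1 _ _ ht (by omega) (by omega) hnm hxt
      omega
    refine ⟨w.concat (hP.2 n hn (by omega)), hw.concat hnew _, by simp [hlen]; omega, ?_⟩
    intro v hv
    rw [Walk.support_concat, List.mem_append, List.mem_singleton] at hv
    rcases hv with hv | rfl
    · obtain ⟨t, ht, htn, hxt⟩ := hsupp v hv
      exact ⟨t, ht, by omega, hxt⟩
    · exact ⟨n + 1, by omega, le_rfl, rfl⟩

theorem exists_isCycle (hP : IsIndexedPath G x m) (hm : 3 ≤ m) (hadj : G.Adj (x m) (x 1)) :
    ∃ (v : V) (c : G.Walk v v), c.IsCycle ∧ c.length = m := by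
  obtain ⟨w, hw, hlen, -⟩ := hP.exists_walk (n := m) (by omega) le_rfl
  refine ⟨x m, .cons hadj w, ?_, by simp [hlen]; omega⟩
  rw [Walk.isCycle_iff_isPath_tail_and_le_length]
  exact ⟨by simpa using hw, by simp [hlen]; omega⟩

end IsIndexedPath

section Cycles

variable {G : SimpleGraph V} {x : ℕ → V} {m k : ℕ}

theorem NoCycleGE.lt_of_adj (hcyc : NoCycleGE G k) (hk : 3 ≤ k) (hP : IsIndexedPath G x m)
    (hadj : G.Adj (x m) (x 1)) : m < k := by
  by_cases hm : 3 ≤ m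
  · obtain ⟨v, c, hc, hlen⟩ := hP.exists_isCycle hm hadj
    exact hlen ▸ hcyc v c hc
  · omega

theorem NoCycleGE.add_lt_of_crossPair (hcyc : NoCycleGE G k) (hk : 3 ≤ k)
    (hP : IsIndexedPath G x m) {i j : ℕ} (h : CrossPair G x m i j) : i + m + 1 < k + j := by
  obtain ⟨hi, hij, hjm, hmi, h1j⟩ := h
  have hlt := hcyc.lt_of_adj hk (hP.reroute hi hij hjm h1j) (by
    simpa only [le_refl, if_true, show ¬i + m + 1 - j ≤ i by omega, hi, if_false, show
      i + 1 - 1 = i by omega, show j - 1 - i + (i + m + 1 - j) = m by omega] using hmi)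
  omega

end Cycles

section LongestPath

variable {G : SimpleGraph V} {x : ℕ → V} {m : ℕ} {D : Set V}

theorem IsIndexedPath.mem_pathVerts_of_adj_last (hP : IsIndexedPath G x m) (hm : 1 ≤ m)
    (hmax : ∀ (y : ℕ → V) (m' : ℕ), IsIndexedPath G y m' → y 1 ∈ D → y m' ∈ D → m' ≤ m)
    (hx1 : x 1 ∈ D) {u : V} (hu : u ∈ D) (hadj : G.Adj (x m) u) : u ∈ pathVerts x m := by
  by_contra hnot
  have := hmax _ _ (hP.snoc hnot hadj) (by simpa only [hm, if_true] using hx1)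
    (by simpa only [show ¬m + 1 ≤ m by omega, if_false] using hu)
  omega

theorem IsIndexedPath.mem_pathVerts_of_adj_first (hP : IsIndexedPath G x m) (hm : 1 ≤ m)
    (hmax : ∀ (y : ℕ → V) (m' : ℕ), IsIndexedPath G y m' → y 1 ∈ D → y m' ∈ D → m' ≤ m)
    (hxm : x m ∈ D) {u : V} (hu : u ∈ D) (hadj : G.Adj (x 1) u) : u ∈ pathVerts x m := by
  have hrev := hP.reverse.mem_pathVerts_of_adj_last hm hmax (by simpa using hxm) hu
    (by simpa [show m + 1 - m = 1 by omega] using hadj)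
  obtain ⟨t, ht, htm, rfl⟩ := hrev
  exact ⟨m + 1 - t, by omega, by omega, rfl⟩

end LongestPath

theorem le_ncard_of_mem_disint [Finite V] {G : SimpleGraph V} {α : ℕ} {v : V}
    (hv : v ∈ disint G α) : α + 1 ≤ {u | u ∈ disint G α ∧ G.Adj v u}.ncard := by
  obtain ⟨S, hS, hvS⟩ := hv
  calc α + 1 ≤ {u | u ∈ S ∧ G.Adj v u}.ncard := hS v hvS
    _ ≤ {u | u ∈ disint G α ∧ G.Adj v u}.ncard :=
      Set.ncard_le_ncard (fun _ hu => ⟨Set.mem_sUnion_of_mem hu.1 hS, hu.2⟩) (Set.toFinite _)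

open Classical in
noncomputable def nbrIdx (G : SimpleGraph V) (x : ℕ → V) (m : ℕ) (v : V) : Finset ℕ :=
  (Finset.Icc 1 m).filter fun t => G.Adj v (x t)

theorem mem_nbrIdx {G : SimpleGraph V} {x : ℕ → V} {m t : ℕ} {v : V} :
    t ∈ nbrIdx G x m v ↔ 1 ≤ t ∧ t ≤ m ∧ G.Adj v (x t) := by
  simp [nbrIdx, and_assoc]

theorem ncard_le_card_nbrIdx {G : SimpleGraph V} {x : ℕ → V} {m : ℕ} {D : Set V} {v : V}
    (h : ∀ u ∈ D, G.Adj v u → u ∈ pathVerts x m) :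
    {u | u ∈ D ∧ G.Adj v u}.ncard ≤ (nbrIdx G x m v).card := by
  have hsub : {u | u ∈ D ∧ G.Adj v u} ⊆ x '' (nbrIdx G x m v : Set ℕ) := by
    rintro u ⟨hu, hadj⟩
    obtain ⟨t, ht, htm, rfl⟩ := h u hu hadj
    exact ⟨t, mem_nbrIdx.mpr ⟨ht, htm, hadj⟩, rfl⟩
  calc _ ≤ (x '' (nbrIdx G x m v : Set ℕ)).ncard := Set.ncard_le_ncard hsub (Set.toFinite _)
    _ ≤ (nbrIdx G x m v : Set ℕ).ncard := Set.ncard_image_le (Set.toFinite _)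
    _ = _ := Set.ncard_coe_finset _

theorem Finset.add_le_sum_of_ne {ι M : Type*} [DecidableEq ι] [AddCommMonoid M] [Preorder M]
    [CanonicallyOrderedAdd M] {s : Finset ι} {f : ι → M} {a b : ι} (ha : a ∈ s) (hb : b ∈ s)
    (hab : a ≠ b) : f a + f b ≤ ∑ c ∈ s, f c := by
  rw [← Finset.sum_pair hab]
  exact Finset.sum_le_sum_of_subset
    (Finset.insert_subset ha (Finset.singleton_subset_iff.mpr hb))

section MinCrossPairs

open Finset

def minCrossPairs (A B : Finset ℕ) : Finset (ℕ × ℕ) :=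
  (A ×ˢ B).filter fun p => p.1 < p.2 ∧ Disjoint (Ioo p.1 p.2) (A ∪ B)

variable {A B : Finset ℕ}

theorem mem_minCrossPairs {p : ℕ × ℕ} :
    p ∈ minCrossPairs A B ↔ p.1 ∈ A ∧ p.2 ∈ B ∧ p.1 < p.2 ∧ Disjoint (Ioo p.1 p.2) (A ∪ B) := by
  simp [minCrossPairs, and_assoc]

theorem notMem_of_mem_minCrossPairs {p : ℕ × ℕ} (hp : p ∈ minCrossPairs A B) {t : ℕ}
    (h1 : p.1 < t) (h2 : t < p.2) : t ∉ A ∪ B :=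
  disjoint_left.mp (mem_minCrossPairs.mp hp).2.2.2 (mem_Ioo.mpr ⟨h1, h2⟩)

theorem minCrossPairs_separated {p q : ℕ × ℕ} (hp : p ∈ minCrossPairs A B)
    (hq : q ∈ minCrossPairs A B) (hpq : p ≠ q) : p.2 ≤ q.1 ∨ q.2 ≤ p.1 := by
  obtain ⟨hp1, hp2, hp12, -⟩ := mem_minCrossPairs.mp hp
  obtain ⟨hq1, hq2, hq12, -⟩ := mem_minCrossPairs.mp hq
  by_contra! h
  rcases lt_trichotomy p.1 q.1 with h1 | h1 | h1
  · exact notMem_of_mem_minCrossPairs hp h1 h.1 (mem_union_left _ hq1)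
  · rcases lt_trichotomy p.2 q.2 with h2 | h2 | h2
    · exact notMem_of_mem_minCrossPairs hq (by omega) h2 (mem_union_right _ hp2)
    · exact hpq (Prod.ext h1 h2)
    · exact notMem_of_mem_minCrossPairs hp (by omega) h2 (mem_union_right _ hq2)
  · exact notMem_of_mem_minCrossPairs hq h1 h.2 (mem_union_left _ hp1)

theorem exists_mem_minCrossPairs_between {a b : ℕ} (ha : a ∈ A) (hb : b ∈ B) (hab : a < b) :
    ∃ p ∈ minCrossPairs A B, a ≤ p.1 ∧ p.2 ≤ b := by
  induction hd : b - a using Nat.strong_induction_on generalizing a b with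
  | _ d ih =>
    by_cases hdisj : Disjoint (Ioo a b) (A ∪ B)
    · exact ⟨(a, b), mem_minCrossPairs.mpr ⟨ha, hb, hab, hdisj⟩, le_rfl, le_rfl⟩
    · obtain ⟨t, ht, htAB⟩ := not_disjoint_iff.mp hdisj
      rw [mem_Ioo] at ht
      rcases mem_union.mp htAB with htA | htB
      · obtain ⟨p, hp, h1, h2⟩ := ih (b - t) (by omega) htA hb ht.2 rfl
        exact ⟨p, hp, by omega, h2⟩
      · obtain ⟨p, hp, h1, h2⟩ := ih (t - a) (by omega) ha htB ht.1 rfl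
        exact ⟨p, hp, h1, by omega⟩

/-- Between consecutive common elements `r < r'` of `A` and `B` lies a minimal crossing pair;
these pairs are distinct for distinct `r`. -/
theorem card_inter_le_card_minCrossPairs : (A ∩ B).card ≤ (minCrossPairs A B).card + 1 := by
  rcases (A ∩ B).eq_empty_or_nonempty with hAB | hAB
  · simp [hAB]
  set M := (A ∩ B).max' hAB
  have hM : M ∈ A ∩ B := max'_mem _ hAB
  have hpair : ∀ r ∈ (A ∩ B).erase M, ∃ p ∈ minCrossPairs A B,
      r ≤ p.1 ∧ ∀ r' ∈ A ∩ B, r < r' → p.2 ≤ r' := by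
    intro r hr
    obtain ⟨hrM, hrAB⟩ := mem_erase.mp hr
    have hne : ((A ∩ B).filter (r < ·)).Nonempty :=
      ⟨M, mem_filter.mpr ⟨hM, lt_of_le_of_ne (le_max' _ _ hrAB) hrM⟩⟩
    obtain ⟨hnextAB, hrnext⟩ := mem_filter.mp (min'_mem _ hne)
    obtain ⟨p, hp, h1, h2⟩ := exists_mem_minCrossPairs_between (mem_inter.mp hrAB).1
      (mem_inter.mp hnextAB).2 hrnext
    exact ⟨p, hp, h1, fun r' hr' hrr' => h2.trans (min'_le _ _ (mem_filter.mpr ⟨hr', hrr'⟩))⟩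
  choose! f hf using hpair
  have hmono : StrictMonoOn (fun r => (f r).2) ((A ∩ B).erase M : Set ℕ) := by
    intro r hr r' hr' hlt
    have h1 := (hf r hr).2.2 r' (mem_erase.mp hr').2 hlt
    have h2 := (hf r' hr').2.1
    have h3 := (mem_minCrossPairs.mp (hf r' hr').1).2.2.1
    dsimp only
    omega
  have := card_le_card_of_injOn f (fun r hr => (hf r hr).1) (hmono.injOn.of_comp (g := Prod.snd))
  have := card_erase_add_one hM
  omega

theorem card_union_add_sum_minCrossPairs_le {lo hi : ℕ} (h : A ∪ B ⊆ Icc lo hi) :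
    (A ∪ B).card + ∑ p ∈ minCrossPairs A B, (p.2 - p.1 - 1) ≤ (Icc lo hi).card := by
  have hdisj : (minCrossPairs A B : Set (ℕ × ℕ)).PairwiseDisjoint fun p => Ioo p.1 p.2 := by
    intro p hp q hq hpq
    rw [Function.onFun, Finset.disjoint_left]
    intro t ht ht'
    rw [mem_Ioo] at ht ht'
    rcases minCrossPairs_separated hp hq hpq with h | h <;> omega
  have hsub : (A ∪ B) ∪ (minCrossPairs A B).biUnion (fun p => Ioo p.1 p.2) ⊆ Icc lo hi := by
    refine union_subset h fun t ht => ?_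
    obtain ⟨p, hp, ht⟩ := mem_biUnion.mp ht
    obtain ⟨hp1, hp2, -⟩ := mem_minCrossPairs.mp hp
    have h1 := mem_Icc.mp (h (mem_union_left B hp1))
    have h2 := mem_Icc.mp (h (mem_union_right A hp2))
    rw [mem_Ioo] at ht
    exact mem_Icc.mpr ⟨by omega, by omega⟩
  have hdisj' : Disjoint (A ∪ B) ((minCrossPairs A B).biUnion fun p => Ioo p.1 p.2) := by
    rw [disjoint_biUnion_right]
    exact fun p hp => disjoint_left.mpr fun t htAB ht =>
      notMem_of_mem_minCrossPairs hp (mem_Ioo.mp ht).1 (mem_Ioo.mp ht).2 htAB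
  have := card_le_card hsub
  rw [card_union_of_disjoint hdisj', card_biUnion hdisj] at this
  simpa only [Nat.card_Ioo] using this

theorem card_add_card_add_sum_minCrossPairs_le {lo hi : ℕ} (h : A ∪ B ⊆ Icc lo hi) :
    A.card + B.card + ∑ p ∈ minCrossPairs A B, (p.2 - p.1 - 1) ≤
      (Icc lo hi).card + (minCrossPairs A B).card + 1 := by
  have := card_union_add_card_inter A B
  have := card_union_add_sum_minCrossPairs_le h
  have := card_inter_le_card_minCrossPairs (A := A) (B := B)
  omega

end MinCrossPairs

section NbrIdx

variable {G : SimpleGraph V} {x : ℕ → V} {m : ℕ}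

theorem nbrIdx_union_subset (hne : ¬G.Adj (x m) (x 1)) :
    nbrIdx G x m (x m) ∪ nbrIdx G x m (x 1) ⊆ Finset.Icc 2 (m - 1) := by
  intro t ht
  rw [Finset.mem_union, mem_nbrIdx, mem_nbrIdx] at ht
  rw [Finset.mem_Icc]
  rcases ht with ⟨ht, htm, hadj⟩ | ⟨ht, htm, hadj⟩
  · have h1 : t ≠ 1 := by rintro rfl; exact hne hadj
    have hm : t ≠ m := by rintro rfl; exact G.irrefl hadj
    omega
  · have h1 : t ≠ 1 := by rintro rfl; exact G.irrefl hadj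
    have hm : t ≠ m := by rintro rfl; exact hne hadj.symm
    omega

theorem MinCrossPair.mem_minCrossPairs_nbrIdx {i j : ℕ} (h : MinCrossPair G x m i j) :
    (i, j) ∈ minCrossPairs (nbrIdx G x m (x m)) (nbrIdx G x m (x 1)) := by
  obtain ⟨⟨hi, hij, hjm, hmi, h1j⟩, hmin⟩ := h
  refine mem_minCrossPairs.mpr ⟨mem_nbrIdx.mpr ⟨hi, by omega, hmi⟩,
    mem_nbrIdx.mpr ⟨by omega, hjm, h1j⟩, hij, Finset.disjoint_left.mpr fun t ht htAB => ?_⟩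
  rw [Finset.mem_Ioo] at ht
  rw [Finset.mem_union, mem_nbrIdx, mem_nbrIdx] at htAB
  obtain ⟨h1, hm⟩ := hmin t ht.1 ht.2
  rcases htAB with ⟨-, -, h⟩ | ⟨-, -, h⟩
  exacts [hm h, h1 h]

theorem crossPair_of_mem_minCrossPairs {p : ℕ × ℕ}
    (hp : p ∈ minCrossPairs (nbrIdx G x m (x m)) (nbrIdx G x m (x 1))) :
    CrossPair G x m p.1 p.2 := by
  obtain ⟨h1, h2, h12, -⟩ := mem_minCrossPairs.mp hp
  obtain ⟨hi, -, hmi⟩ := mem_nbrIdx.mp h1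
  obtain ⟨-, hjm, h1j⟩ := mem_nbrIdx.mp h2
  exact ⟨hi, h12, hjm, hmi, h1j⟩

theorem NoCycleGE.card_nbrIdx_add_card_nbrIdx_add_sum_le {k : ℕ} (hcyc : NoCycleGE G k)
    (hk : 3 ≤ k) (hP : IsIndexedPath G x m) (hmk : k ≤ m) :
    (nbrIdx G x m (x m)).card + (nbrIdx G x m (x 1)).card +
      ∑ p ∈ minCrossPairs (nbrIdx G x m (x m)) (nbrIdx G x m (x 1)), (p.2 - p.1 - 2) ≤
        m - 1 := by
  have hcount := card_add_card_add_sum_minCrossPairs_le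
    (nbrIdx_union_subset fun h => (hcyc.lt_of_adj hk hP h).not_ge hmk)
  have hsplit : ∀ p ∈ minCrossPairs (nbrIdx G x m (x m)) (nbrIdx G x m (x 1)),
      p.2 - p.1 - 1 = (p.2 - p.1 - 2) + 1 := fun p hp => by
    have := hcyc.add_lt_of_crossPair hk hP (crossPair_of_mem_minCrossPairs hp)
    omega
  rw [Finset.sum_congr rfl hsplit, Finset.sum_add_distrib, Finset.sum_const, smul_eq_mul,
    mul_one, Nat.card_Icc] at hcount
  omega

end NbrIdx

theorem stmt_10_general (k ℓ : ℕ) (hk : 6 ≤ k) (heven : Even k) (hℓ : ℓ = (k - 2) / 2)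
    {V : Type*} [Fintype V] (G : SimpleGraph V)
    (hcyc : NoCycleGE G k) (D : Set V) (hD : D = disint G (ℓ - 1))
    (x : ℕ → V) (m : ℕ) (hP : IsIndexedPath G x m) (hx1 : x 1 ∈ D) (hxm : x m ∈ D)
    (hmax : ∀ (y : ℕ → V) (m' : ℕ), IsIndexedPath G y m' → y 1 ∈ D → y m' ∈ D → m' ≤ m)
    (hmk : k ≤ m) (i j : ℕ) (hij : MinCrossPair G x m i j)
    (hlen : ∀ i' j', MinCrossPair G x m i' j' → j' - i' - 1 ≤ j - i - 1) :
    (k + 2 ≤ m → ∀ i' j', MinCrossPair G x m i' j' → i' = i ∧ j' = j) ∧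
    (m = k + 1 → ∀ p₁ p₂ p₃ : ℕ × ℕ,
      MinCrossPair G x m p₁.1 p₁.2 → MinCrossPair G x m p₂.1 p₂.2 →
      MinCrossPair G x m p₃.1 p₃.2 → p₁ = p₂ ∨ p₁ = p₃ ∨ p₂ = p₃) ∧
    (m = k → ∀ i' j', MinCrossPair G x m i' j' → (i', j') ≠ (i, j) → j' - i' = 2) := by
  have hk3 : 3 ≤ k := by omega
  have hdeg : ∀ v ∈ D, ℓ ≤ {u | u ∈ D ∧ G.Adj v u}.ncard := fun v hv => by
    subst hD
    exact le_trans (by omega) (le_ncard_of_mem_disint hv)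
  have hA := (hdeg _ hxm).trans <| ncard_le_card_nbrIdx fun _ hu =>
    hP.mem_pathVerts_of_adj_last (by omega) hmax hx1 hu
  have hB := (hdeg _ hx1).trans <| ncard_le_card_nbrIdx fun _ hu =>
    hP.mem_pathVerts_of_adj_first (by omega) hmax hxm hu
  have hcount := hcyc.card_nbrIdx_add_card_nbrIdx_add_sum_le hk3 hP hmk
  set MP := minCrossPairs (nbrIdx G x m (x m)) (nbrIdx G x m (x 1))
  have hexcess : ∑ p ∈ MP, (p.2 - p.1 - 2) ≤ m - k + 1 := by
    obtain ⟨r, rfl⟩ := heven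
    omega
  have hgap : ∀ p ∈ MP, p.1 + m + 1 < k + p.2 := fun p hp =>
    hcyc.add_lt_of_crossPair hk3 hP (crossPair_of_mem_minCrossPairs hp)
  have hmem : ∀ {i j}, MinCrossPair G x m i j → (i, j) ∈ MP := fun h =>
    h.mem_minCrossPairs_nbrIdx
  refine ⟨fun hm i' j' hij' => ?_, fun hm p₁ p₂ p₃ h₁ h₂ h₃ => ?_, fun hm i' j' hij' hne => ?_⟩
  · by_contra hne
    have := (Finset.add_le_sum_of_ne (hmem hij') (hmem hij) (by simpa using hne)).trans hexcess
    have := hgap _ (hmem hij)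
    have := hgap _ (hmem hij')
    omega
  · by_contra! hne
    have h3 : 2 < MP.card := Finset.two_lt_card.mpr ⟨_, hmem h₁, _, hmem h₂, _, hmem h₃, hne⟩
    have := (Finset.card_nsmul_le_sum MP _ 1 fun p hp => by have := hgap p hp; omega).trans
      hexcess
    rw [smul_eq_mul, mul_one] at this
    omega
  · have := (Finset.add_le_sum_of_ne (hmem hij') (hmem hij) hne).trans hexcess
    have := hlen i' j' hij'
    have := hgap _ (hmem hij)
    have := hgap _ (hmem hij')
    omega

/-- Number of minimal crossing pairs for even `k` (Claim 3.9). -/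
theorem stmt_10 (k ℓ : ℕ) (hk : 6 ≤ k) (heven : Even k) (hℓ : ℓ = (k - 2) / 2)
    {V : Type*} [Fintype V] (G : SimpleGraph V) (h2c : TwoConnected G)
    (hcyc : NoCycleGE G k) (D : Set V) (hD : D = disint G (ℓ - 1)) (hne : D.Nonempty)
    (x : ℕ → V) (m : ℕ) (hP : IsIndexedPath G x m) (hx1 : x 1 ∈ D) (hxm : x m ∈ D)
    (hmax : ∀ (y : ℕ → V) (m' : ℕ), IsIndexedPath G y m' → y 1 ∈ D → y m' ∈ D → m' ≤ m)
    (hmk : k ≤ m) (i j : ℕ) (hij : MinCrossPair G x m i j)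
    (hlen : ∀ i' j', MinCrossPair G x m i' j' → j' - i' - 1 ≤ j - i - 1) :
    (k + 2 ≤ m → ∀ i' j', MinCrossPair G x m i' j' → i' = i ∧ j' = j) ∧
    (m = k + 1 → ∀ p₁ p₂ p₃ : ℕ × ℕ,
      MinCrossPair G x m p₁.1 p₁.2 → MinCrossPair G x m p₂.1 p₂.2 →
      MinCrossPair G x m p₃.1 p₃.2 → p₁ = p₂ ∨ p₁ = p₃ ∨ p₂ = p₃) ∧
    (m = k → ∀ i' j', MinCrossPair G x m i' j' → (i', j') ≠ (i, j) → j' - i' = 2) :=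
  stmt_10_general k ℓ hk heven hℓ G hcyc D hD x m hP hx1 hxm hmax hmk i j hij hlen
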